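/- arXiv:math/0012036 — 2 statements merged into one kernel-verified Lean document; each statement's English description precedes it below -/
import Mathlib

section
/- Let h be an n-cycle in S_n and let σ = (a b c) be a 3-cycle with distinct points a, b, c. Then h·σ is again an n-cycle if and only if the points a, b, c occur in the cyclic order a, b, c when traversing h (equivalently, starting from a and repeatedly applying h, the point b is reached before c). -/
/-!
Write `b = h^i a` and `c = h^j a` with `0 < i, j < n`. The product `g = h * (a b c)` agrees
with `h` except at `a ↦ h b`, `b ↦ h c`, `c ↦ h a`. If `i < j`, the `g`-orbit of `a` runs
through the arcs `h^(i+1) a, …, c`, then `h a, …, b`, then `h^(j+1) a, …, h^(n-1) a`, so it is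
everything. If `j < i`, it runs `a, h^(i+1) a, …, h^(n-1) a` and closes up after `n - i < n`
steps.
-/

open Finset

namespace Equiv

variable {α : Type*} [DecidableEq α] {a b c x : α}

theorem swap_mul_swap_apply_first (hab : a ≠ b) (hbc : b ≠ c) :
    (swap a c * swap a b) a = b := by
  rw [Perm.mul_apply, swap_apply_left, swap_apply_of_ne_of_ne hab.symm hbc]

theorem swap_mul_swap_apply_second : (swap a c * swap a b) b = c := by
  rw [Perm.mul_apply, swap_apply_right, swap_apply_left]

theorem swap_mul_swap_apply_third (hac : a ≠ c) (hbc : b ≠ c) :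
    (swap a c * swap a b) c = a := by
  rw [Perm.mul_apply, swap_apply_of_ne_of_ne hac.symm hbc.symm, swap_apply_right]

theorem swap_mul_swap_apply_of_ne (hxa : x ≠ a) (hxb : x ≠ b) (hxc : x ≠ c) :
    (swap a c * swap a b) x = x := by
  rw [Perm.mul_apply, swap_apply_of_ne_of_ne hxa hxb, swap_apply_of_ne_of_ne hxa hxc]

end Equiv

namespace Equiv.Perm

variable {α : Type*}

theorem pow_apply_eq_of_forall_apply_eq_succ {g : Perm α} (u : ℕ → α) {s t : ℕ}
    (hst : s ≤ t) (hu : ∀ m, s ≤ m → m < t → g (u m) = u (m + 1)) :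
    (g ^ (t - s)) (u s) = u t := by
  induction t, hst using Nat.le_induction with
  | base => simp
  | succ t hst ih =>
    rw [Nat.sub_add_comm hst, pow_succ', mul_apply, ih fun m h₁ h₂ => hu m h₁ (by omega),
      hu t hst (by omega)]

theorem sameCycle_of_forall_apply_eq_succ {g : Perm α} (u : ℕ → α) {s t : ℕ} (hst : s ≤ t)
    (hu : ∀ m, s ≤ m → m < t → g (u m) = u (m + 1)) : g.SameCycle (u s) (u t) :=
  ⟨(t - s : ℕ), by rw [zpow_natCast, pow_apply_eq_of_forall_apply_eq_succ u hst hu]⟩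

theorem IsCycle.pow_apply_ne_pow_apply [Finite α] {h : Perm α} (hc : h.IsCycle) {a : α}
    (ha : h a ≠ a) {r s : ℕ} (hr : r < orderOf h) (hs : s < orderOf h) (hrs : r ≠ s) :
    (h ^ r) a ≠ (h ^ s) a :=
  fun e => hrs (pow_injOn_Iio_orderOf hr hs (hc.pow_eq_pow_iff.2 ⟨a, ha, e⟩))

variable [Fintype α] [DecidableEq α]

theorem isCycle_and_support_eq_univ_iff [Nontrivial α] {g : Perm α} (x : α) :
    g.IsCycle ∧ g.support = univ ↔ ∀ y, g.SameCycle x y := by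
  constructor
  · rintro ⟨hg, hsupp⟩ y
    exact hg.sameCycle (by simp [← mem_support, hsupp]) (by simp [← mem_support, hsupp])
  · intro hx
    obtain ⟨y, hy⟩ := exists_ne x
    have hgx : g x ≠ x := fun hfix => hy ((hx y).eq_of_left hfix).symm
    refine ⟨⟨x, hgx, fun y _ => hx y⟩, eq_univ_of_forall fun y => mem_support.2 ?_⟩
    exact fun hfix => hgx ((hx y).apply_eq_self_iff.2 hfix)

section ThreeCycle

variable {h : Perm α} {a : α} {i j : ℕ}

theorem IsCycle.exists_pow_apply_eq (hc : h.IsCycle) (hs : h.support = univ) (x y : α) :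
    ∃ m < orderOf h, (h ^ m) x = y :=
  (hc.sameCycle (by simp [← mem_support, hs]) (by simp [← mem_support, hs])).exists_pow_eq'

theorem IsCycle.mul_swap_mul_swap_pow_apply (hc : h.IsCycle) (ha : h a ≠ a)
    (hi : i < orderOf h) (hj : j < orderOf h) {m : ℕ} (hm : m < orderOf h) (hm0 : m ≠ 0)
    (hmi : m ≠ i) (hmj : m ≠ j) :
    (h * (swap a ((h ^ j) a) * swap a ((h ^ i) a))) ((h ^ m) a) = (h ^ (m + 1)) a := by
  have hne {r : ℕ} (hr : r < orderOf h) (hmr : m ≠ r) : (h ^ m) a ≠ (h ^ r) a :=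
    hc.pow_apply_ne_pow_apply ha hm hr hmr
  rw [mul_apply, swap_mul_swap_apply_of_ne (by simpa using hne (r := 0) (by omega) hm0)
    (hne hi hmi) (hne hj hmj), pow_succ', mul_apply]

theorem IsCycle.isCycle_mul_swap_mul_swap (hc : h.IsCycle) (hs : h.support = univ)
    (hi0 : 0 < i) (hij : i < j) (hj : j < orderOf h) :
    (h * (swap a ((h ^ j) a) * swap a ((h ^ i) a))).IsCycle ∧
      (h * (swap a ((h ^ j) a) * swap a ((h ^ i) a))).support = univ := by
  set g := h * (swap a ((h ^ j) a) * swap a ((h ^ i) a))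
  have ha : h a ≠ a := mem_support.1 (hs ▸ mem_univ a)
  have hai : a ≠ (h ^ i) a := by
    simpa using hc.pow_apply_ne_pow_apply ha (r := 0) (by omega) (by omega) hi0.ne
  have haj : a ≠ (h ^ j) a := by
    simpa using hc.pow_apply_ne_pow_apply ha (r := 0) (by omega) hj (by omega)
  have hij' : (h ^ i) a ≠ (h ^ j) a := hc.pow_apply_ne_pow_apply ha (by omega) hj hij.ne
  have seg (s t : ℕ) (hst : s ≤ t) (ht : t ≤ orderOf h) (hs0 : 0 < s)
      (hgap : ∀ k, s ≤ k → k < t → k ≠ i ∧ k ≠ j) :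
      g.SameCycle ((h ^ s) a) ((h ^ t) a) :=
    sameCycle_of_forall_apply_eq_succ (fun k => (h ^ k) a) hst fun k hk hkt =>
      hc.mul_swap_mul_swap_pow_apply ha (by omega) hj (by omega) (by omega)
        (hgap k hk hkt).1 (hgap k hk hkt).2
  have g_a : g a = (h ^ (i + 1)) a := by
    rw [mul_apply, swap_mul_swap_apply_first hai hij', pow_succ', mul_apply]
  have g_i : g ((h ^ i) a) = (h ^ (j + 1)) a := by
    rw [mul_apply, swap_mul_swap_apply_second, pow_succ', mul_apply]
  have g_j : g ((h ^ j) a) = (h ^ 1) a := by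
    rw [mul_apply, swap_mul_swap_apply_third haj hij', pow_one]
  have reach_i1 : g.SameCycle a ((h ^ (i + 1)) a) :=
    g_a ▸ sameCycle_apply_right.2 (SameCycle.refl _ _)
  have reach_j : g.SameCycle a ((h ^ j) a) :=
    reach_i1.trans <| seg _ _ hij (by omega) (by omega) fun k hk hkj => ⟨by omega, by omega⟩
  have reach_1 : g.SameCycle a ((h ^ 1) a) := g_j ▸ sameCycle_apply_right.2 reach_j
  have reach_i : g.SameCycle a ((h ^ i) a) :=
    reach_1.trans (seg _ _ hi0 (by omega) one_pos fun k hk hki => ⟨by omega, by omega⟩)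
  have reach_j1 : g.SameCycle a ((h ^ (j + 1)) a) := g_i ▸ sameCycle_apply_right.2 reach_i
  have : Nontrivial α := ⟨⟨a, h a, ha.symm⟩⟩
  refine (isCycle_and_support_eq_univ_iff a).2 fun y => ?_
  obtain ⟨m, hm, rfl⟩ := hc.exists_pow_apply_eq hs a y
  rcases Nat.eq_zero_or_pos m with rfl | hm0
  · exact SameCycle.refl _ _
  rcases le_or_gt m i with hmi | hmi
  · exact reach_1.trans (seg _ _ hm0 (by omega) one_pos fun k hk hkm => ⟨by omega, by omega⟩)
  rcases le_or_gt m j with hmj | hmj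
  · exact reach_i1.trans (seg _ _ hmi hm.le (by omega) fun k hk hkm => ⟨by omega, by omega⟩)
  · exact reach_j1.trans (seg _ _ hmj hm.le (by omega) fun k hk hkm => ⟨by omega, by omega⟩)

theorem IsCycle.not_isCycle_mul_swap_mul_swap (hc : h.IsCycle) (hs : h.support = univ)
    (hi0 : 0 < i) (hji : j < i) (hi : i < orderOf h) :
    ¬((h * (swap a ((h ^ j) a) * swap a ((h ^ i) a))).IsCycle ∧
      (h * (swap a ((h ^ j) a) * swap a ((h ^ i) a))).support = univ) := by
  set g := h * (swap a ((h ^ j) a) * swap a ((h ^ i) a))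
  rintro ⟨hg, hgs⟩
  have ha : h a ≠ a := mem_support.1 (hs ▸ mem_univ a)
  have hai : a ≠ (h ^ i) a := by
    simpa using hc.pow_apply_ne_pow_apply ha (r := 0) (by omega) hi hi0.ne
  have hij : (h ^ i) a ≠ (h ^ j) a := hc.pow_apply_ne_pow_apply ha hi (by omega) hji.ne'
  have g_a : g a = (h ^ (i + 1)) a := by
    rw [mul_apply, swap_mul_swap_apply_first hai hij, pow_succ', mul_apply]
  -- `g` sends `a` to `h b`, then agrees with `h` all the way back to `a`, never reaching `h a`
  have hret : (g ^ (orderOf h - i)) a = a := by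
    have hrun := pow_apply_eq_of_forall_apply_eq_succ (g := g) (fun k => (h ^ k) a)
      (show i + 1 ≤ orderOf h by omega) fun k hk hkN =>
        hc.mul_swap_mul_swap_pow_apply ha hi (by omega) hkN (by omega) (by omega) (by omega)
    rwa [pow_orderOf_eq_one, one_apply, ← g_a, ← mul_apply, ← pow_succ,
      show orderOf h - (i + 1) + 1 = orderOf h - i by omega] at hrun
  have hdvd := orderOf_dvd_of_pow_eq_one <|
    (hg.pow_eq_one_iff' (by simp [← mem_support, hgs])).2 hret
  rw [hg.orderOf, hgs, ← hs, ← hc.orderOf] at hdvd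
  exact Nat.not_dvd_of_pos_of_lt (by omega) (by omega) hdvd

end ThreeCycle

end Equiv.Perm

open Equiv.Perm in
theorem n_cycle_times_three_cycle_general (n : ℕ) (h : Equiv.Perm (Fin n))
    (hc : h.IsCycle) (hs : h.support = Finset.univ)
    (a b c : Fin n) (hab : a ≠ b) (hbc : b ≠ c) :
    ((h * (Equiv.swap a c * Equiv.swap a b)).IsCycle ∧
        (h * (Equiv.swap a c * Equiv.swap a b)).support = Finset.univ) ↔
      ∃ i j : ℕ, 0 < i ∧ i < j ∧ j < n ∧ (h ^ i) a = b ∧ (h ^ j) a = c := by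
  have hN : orderOf h = n := by rw [hc.orderOf, hs, card_univ, Fintype.card_fin]
  constructor
  · intro hg
    obtain ⟨i, hi, rfl⟩ := hc.exists_pow_apply_eq hs a b
    obtain ⟨j, hj, rfl⟩ := hc.exists_pow_apply_eq hs a c
    have hi0 : 0 < i := Nat.pos_of_ne_zero (by rintro rfl; simp at hab)
    have hij : i ≠ j := by rintro rfl; exact hbc rfl
    refine ⟨i, j, hi0, ?_, by omega, rfl, rfl⟩
    by_contra! hji
    exact hc.not_isCycle_mul_swap_mul_swap hs hi0 (by omega) hi hg
  · rintro ⟨i, j, hi0, hij, hj, rfl, rfl⟩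
    exact hc.isCycle_mul_swap_mul_swap hs hi0 hij (by omega)

theorem n_cycle_times_three_cycle (n : ℕ) (h : Equiv.Perm (Fin n))
    (hc : h.IsCycle) (hs : h.support = Finset.univ)
    (a b c : Fin n) (hab : a ≠ b) (hac : a ≠ c) (hbc : b ≠ c) :
    ((h * (Equiv.swap a c * Equiv.swap a b)).IsCycle ∧
        (h * (Equiv.swap a c * Equiv.swap a b)).support = Finset.univ) ↔
      ∃ i j : ℕ, 0 < i ∧ i < j ∧ j < n ∧ (h ^ i) a = b ∧ (h ^ j) a = c :=
  n_cycle_times_three_cycle_general n h hc hs a b c hab hbc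
end

section
/- Let h be an n-cycle in S_n and let s = (a c)(b d) be a product of two disjoint transpositions with a, b, c, d distinct. Then h·s is an n-cycle if and only if the pairs {a,c} and {b,d} interlace in the cyclic order of h, i.e., traversing h starting from a, exactly one of b, d occurs before c. -/
/-! Write `x t = h ^ t a`, so that `b, c, d` sit at positions `p, q, r` of the cycle `h`.
Away from `a, b, c, d` the product `f = h (a c) (b d)` still sends `x t` to `x (t + 1)`, while it
sends `a, b, c, d` to `x (q + 1), x (r + 1), x 1, x (p + 1)`. If `q` lies between `p` and `r`, say
`p < q < r`, the orbit of `a` under `f` runs through the arcs `(q, r]`, `(p, q]`, `(0, p]`,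
`(r, n]` in turn, so it is everything. Otherwise `b` and `d` lie on the same side of `q`, and `f`
closes up the arc `(q, n]` or `(0, q]`, which misses `c` or `a`, into a cycle of its own. -/

open Equiv Finset

namespace Equiv.Perm

variable {α : Type*}

theorem isCycle_and_support_eq_univ_iff_s18 [Fintype α] [DecidableEq α] [Nontrivial α]
    {f : Perm α} : f.IsCycle ∧ f.support = univ ↔ f.IsCycleOn _root_.Set.univ := by
  constructor
  · rintro ⟨hf, hs⟩
    convert hf.isCycleOn
    exact (Set.eq_univ_of_forall fun x => mem_support.1 (hs ▸ mem_univ x)).symm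
  · intro hf
    refine ⟨isCycle_iff_exists_isCycleOn.2 ⟨_, Set.nontrivial_univ, hf, fun x _ => trivial⟩, ?_⟩
    exact eq_univ_of_forall fun x => mem_support.2 (hf.apply_ne Set.nontrivial_univ trivial)

theorem isCycleOn_univ_of_forall_sameCycle {f : Perm α} (a : α) (h : ∀ y, f.SameCycle a y) :
    f.IsCycleOn _root_.Set.univ :=
  ⟨f.bijective.bijOn_univ, fun x _ y _ => (h x).symm.trans (h y)⟩

section Arc

variable {f : Perm α} {x : ℕ → α} {lo hi : ℕ}

theorem pow_apply_eq_of_forall_apply_eq_succ_s18 (hx : ∀ t, lo ≤ t → t < hi → f (x t) = x (t + 1))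
    {k : ℕ} (hk : lo + k ≤ hi) : (f ^ k) (x lo) = x (lo + k) := by
  induction k with
  | zero => rfl
  | succ k ih => rw [pow_succ', mul_apply, ih (by omega), hx _ (by omega) (by omega), add_assoc]

theorem sameCycle_of_forall_apply_eq_succ_s18 (hx : ∀ t, lo ≤ t → t < hi → f (x t) = x (t + 1))
    (hle : lo ≤ hi) : f.SameCycle (x lo) (x hi) :=
  ⟨(hi - lo : ℕ), by
    rw [zpow_natCast, pow_apply_eq_of_forall_apply_eq_succ_s18 hx (by omega), Nat.add_sub_cancel' hle]⟩

theorem not_sameCycle_of_forall_apply_eq_succ [Finite α]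
    (hx : ∀ t, lo ≤ t → t < hi → f (x t) = x (t + 1)) (hclose : f (x hi) = x lo)
    (hle : lo ≤ hi) {y : α}
    (hy : ∀ t, lo ≤ t → t ≤ hi → x t ≠ y) : ¬ f.SameCycle (x lo) y := by
  have hmaps : Set.MapsTo f (x '' Set.Icc lo hi) (x '' Set.Icc lo hi) := by
    rintro _ ⟨t, ⟨hlo, hhi⟩, rfl⟩
    rcases hhi.lt_or_eq with hlt | rfl
    · exact ⟨t + 1, ⟨by omega, hlt⟩, (hx t hlo hlt).symm⟩
    · exact ⟨lo, ⟨le_rfl, hlo⟩, hclose.symm⟩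
  intro hsame
  obtain ⟨k, -, hk⟩ := hsame.exists_pow_eq'
  obtain ⟨t, ht, hxt⟩ := hmaps.perm_pow k ⟨lo, ⟨le_rfl, hle⟩, rfl⟩
  exact hy t ht.1 ht.2 (hxt.trans hk)

end Arc

namespace IsCycleOn

variable [Fintype α] {f : Perm α}

theorem pow_apply_eq_pow_apply_iff_of_lt (hf : f.IsCycleOn _root_.Set.univ) (a : α) {m k : ℕ}
    (hm : m < Fintype.card α) (hk : k < Fintype.card α) : (f ^ m) a = (f ^ k) a ↔ m = k := by
  rw [(show f.IsCycleOn (univ : Finset α) by rwa [coe_univ]).pow_apply_eq_pow_apply (mem_univ a),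
    card_univ, Nat.ModEq, Nat.mod_eq_of_lt hm, Nat.mod_eq_of_lt hk]

theorem pow_card_apply_of_univ (hf : f.IsCycleOn _root_.Set.univ) (a : α) :
    (f ^ Fintype.card α) a = a := by
  simpa using (show f.IsCycleOn (univ : Finset α) by rwa [coe_univ]).pow_card_apply (mem_univ a)

theorem exists_pow_lt_card_apply_eq (hf : f.IsCycleOn _root_.Set.univ) (a b : α) :
    ∃ k < Fintype.card α, (f ^ k) a = b := by
  simpa using
    (show f.IsCycleOn (univ : Finset α) by rwa [coe_univ]).exists_pow_eq (mem_univ a) (mem_univ b)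

theorem pow_apply_ne_self_of_lt (hf : f.IsCycleOn _root_.Set.univ) (a : α) {m : ℕ}
    (hm0 : 0 < m) (hm : m < Fintype.card α) : (f ^ m) a ≠ a := by
  simpa using (hf.pow_apply_eq_pow_apply_iff_of_lt a hm (hm0.trans hm)).not.2 hm0.ne'

end IsCycleOn

section Interlacing

variable [DecidableEq α] {h : Perm α}

theorem mul_swap_mul_swap_apply {a b c d : α} (hab : a ≠ b) (had : a ≠ d) (hcb : c ≠ b)
    (hcd : c ≠ d) :
    (h * (swap a c * swap b d)) a = h c ∧ (h * (swap a c * swap b d)) b = h d ∧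
      (h * (swap a c * swap b d)) c = h a ∧ (h * (swap a c * swap b d)) d = h b := by
  simp [swap_apply_of_ne_of_ne, hab, had, hcb, hcd, hab.symm, had.symm, hcb.symm, hcd.symm]

variable [Fintype α] {a : α} {p q r : ℕ}

theorem mul_swap_mul_swap_pow_apply (hh : h.IsCycleOn _root_.Set.univ)
    (hp : p < Fintype.card α) (hq : q < Fintype.card α) (hr : r < Fintype.card α) {t : ℕ}
    (ht : t < Fintype.card α) (ht0 : t ≠ 0) (htp : t ≠ p) (htq : t ≠ q) (htr : t ≠ r) :
    (h * (swap a ((h ^ q) a) * swap ((h ^ p) a) ((h ^ r) a))) ((h ^ t) a) = (h ^ (t + 1)) a := by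
  have hne : ∀ s < Fintype.card α, t ≠ s → (h ^ t) a ≠ (h ^ s) a := fun s hs hts =>
    (hh.pow_apply_eq_pow_apply_iff_of_lt a ht hs).not.2 hts
  have hna : (h ^ t) a ≠ a := by simpa using hne 0 (by omega) ht0
  rw [mul_apply, mul_apply, swap_apply_of_ne_of_ne (hne p hp htp) (hne r hr htr),
    swap_apply_of_ne_of_ne hna (hne q hq htq), pow_succ', mul_apply]

theorem isCycleOn_univ_mul_swap_mul_swap (hh : h.IsCycleOn _root_.Set.univ)
    (hp : 0 < p) (hpq : p < q) (hqr : q < r) (hr : r < Fintype.card α) :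
    (h * (swap a ((h ^ q) a) * swap ((h ^ p) a) ((h ^ r) a))).IsCycleOn _root_.Set.univ := by
  set n := Fintype.card α
  set f := h * (swap a ((h ^ q) a) * swap ((h ^ p) a) ((h ^ r) a))
  have arc : ∀ lo hi, 0 < lo → hi ≤ n → (∀ t, lo ≤ t → t < hi → t ≠ p ∧ t ≠ q ∧ t ≠ r) →
      f.SameCycle a ((h ^ lo) a) → ∀ t, lo ≤ t → t ≤ hi → f.SameCycle a ((h ^ t) a) :=
    fun lo hi hlo hhi hgap hstart t hlt hth => hstart.trans <|
      sameCycle_of_forall_apply_eq_succ_s18 (x := fun t => (h ^ t) a) (fun s hs hst =>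
        mul_swap_mul_swap_pow_apply hh (by omega) (by omega) hr (by omega) (by omega)
          (hgap s hs (by omega)).1 (hgap s hs (by omega)).2.1 (hgap s hs (by omega)).2.2) hlt
  have jump : ∀ y s, f y = h ((h ^ s) a) → f.SameCycle a y → f.SameCycle a ((h ^ (s + 1)) a) :=
    fun y s hy hay => by rw [pow_succ', mul_apply, ← hy]; exact sameCycle_apply_right.2 hay
  obtain ⟨fa, fb, fc, fd⟩ := mul_swap_mul_swap_apply (h := h)
    (hh.pow_apply_ne_self_of_lt a hp (by omega)).symm
    (hh.pow_apply_ne_self_of_lt a (by omega) hr).symm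
    ((hh.pow_apply_eq_pow_apply_iff_of_lt a (by omega) (by omega)).not.2 hpq.ne')
    ((hh.pow_apply_eq_pow_apply_iff_of_lt a (by omega) hr).not.2 hqr.ne)
  have arc_qr := arc (q + 1) r (by omega) (by omega) (fun t _ _ => by omega)
    (jump a q fa .rfl)
  have arc_pq := arc (p + 1) q (by omega) (by omega) (fun t _ _ => by omega)
    (jump _ p fd (arc_qr r (by omega) le_rfl))
  have arc_0p := arc 1 p (by omega) (by omega) (fun t _ _ => by omega)
    (jump _ 0 (by rw [fc, pow_zero, one_apply]) (arc_pq q (by omega) le_rfl))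
  have arc_rn := arc (r + 1) n (by omega) le_rfl (fun t _ _ => by omega)
    (jump _ r fb (arc_0p p (by omega) le_rfl))
  refine isCycleOn_univ_of_forall_sameCycle a fun y => ?_
  obtain ⟨t, ht, rfl⟩ := hh.exists_pow_lt_card_apply_eq a y
  rcases Nat.eq_zero_or_pos t with rfl | ht0
  · simpa using SameCycle.refl f a
  rcases le_or_gt t p with htp | htp
  · exact arc_0p t ht0 htp
  rcases le_or_gt t q with htq | htq
  · exact arc_pq t htp htq
  rcases le_or_gt t r with htr | htr
  · exact arc_qr t htq htr
  · exact arc_rn t htr ht.le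

theorem not_isCycleOn_univ_mul_swap_mul_swap_of_lt_of_lt (hh : h.IsCycleOn _root_.Set.univ)
    (hp : 0 < p) (hr : 0 < r) (hpq : p < q) (hrq : r < q) (hq : q < Fintype.card α) :
    ¬ (h * (swap a ((h ^ q) a) * swap ((h ^ p) a) ((h ^ r) a))).IsCycleOn _root_.Set.univ := by
  intro hf
  have fa := (mul_swap_mul_swap_apply (h := h)
    (hh.pow_apply_ne_self_of_lt a hp (by omega)).symm
    (hh.pow_apply_ne_self_of_lt a hr (by omega)).symm
    ((hh.pow_apply_eq_pow_apply_iff_of_lt a hq (by omega)).not.2 hpq.ne')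
    ((hh.pow_apply_eq_pow_apply_iff_of_lt a hq (by omega)).not.2 hrq.ne')).1
  refine not_sameCycle_of_forall_apply_eq_succ (x := fun t => (h ^ t) a) (lo := q + 1)
    (hi := Fintype.card α) (fun t ht1 ht2 => mul_swap_mul_swap_pow_apply hh (by omega) hq
      (by omega) ht2 (by omega) (by omega) (by omega) (by omega)) ?_ hq (y := (h ^ q) a) ?_
    (hf.2 trivial trivial)
  · simp only [hh.pow_card_apply_of_univ, fa, pow_succ', mul_apply]
  · intro t ht1 ht2
    rcases ht2.lt_or_eq with ht | rfl
    · exact (hh.pow_apply_eq_pow_apply_iff_of_lt a ht hq).not.2 (by omega)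
    · rw [hh.pow_card_apply_of_univ]
      exact (hh.pow_apply_ne_self_of_lt a (by omega) hq).symm

theorem not_isCycleOn_univ_mul_swap_mul_swap_of_gt_of_gt (hh : h.IsCycleOn _root_.Set.univ)
    (hq : 0 < q) (hqp : q < p) (hqr : q < r) (hp : p < Fintype.card α)
    (hr : r < Fintype.card α) :
    ¬ (h * (swap a ((h ^ q) a) * swap ((h ^ p) a) ((h ^ r) a))).IsCycleOn _root_.Set.univ := by
  intro hf
  have fc := (mul_swap_mul_swap_apply (h := h)
    (hh.pow_apply_ne_self_of_lt a (by omega) hp).symm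
    (hh.pow_apply_ne_self_of_lt a (by omega) hr).symm
    ((hh.pow_apply_eq_pow_apply_iff_of_lt a (by omega) hp).not.2 hqp.ne)
    ((hh.pow_apply_eq_pow_apply_iff_of_lt a (by omega) hr).not.2 hqr.ne)).2.2.1
  refine not_sameCycle_of_forall_apply_eq_succ (x := fun t => (h ^ t) a) (lo := 1)
    (hi := q) (fun t ht1 ht2 => mul_swap_mul_swap_pow_apply hh hp (by omega) hr (by omega)
      (by omega) (by omega) (by omega) (by omega)) ?_ hq (y := a) ?_ (hf.2 trivial trivial)
  · simp only [fc, pow_one]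
  · exact fun t ht1 ht2 => hh.pow_apply_ne_self_of_lt a ht1 (by omega)

end Interlacing

end Equiv.Perm

theorem n_cycle_times_two_disjoint_transpositions_general (n : ℕ) (h : Equiv.Perm (Fin n))
    (hc : h.IsCycle) (hs : h.support = Finset.univ)
    (a b c d : Fin n)
    (hab : a ≠ b) (hac : a ≠ c) (had : a ≠ d)
    (hbc : b ≠ c) (hcd : c ≠ d) :
    ((h * (Equiv.swap a c * Equiv.swap b d)).IsCycle ∧
        (h * (Equiv.swap a c * Equiv.swap b d)).support = Finset.univ) ↔
      ∃ i j k : ℕ, 0 < i ∧ i < j ∧ j < k ∧ k < n ∧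
        (((h ^ i) a = b ∧ (h ^ j) a = c ∧ (h ^ k) a = d) ∨
          ((h ^ i) a = d ∧ (h ^ j) a = c ∧ (h ^ k) a = b)) := by
  have : Nontrivial (Fin n) := ⟨a, b, hab⟩
  have hh : h.IsCycleOn Set.univ := Perm.isCycle_and_support_eq_univ_iff_s18.1 ⟨hc, hs⟩
  rw [Perm.isCycle_and_support_eq_univ_iff_s18]
  refine ⟨fun hf => ?_, ?_⟩
  · obtain ⟨p, hp, rfl⟩ := hh.exists_pow_lt_card_apply_eq a b
    obtain ⟨q, hq, rfl⟩ := hh.exists_pow_lt_card_apply_eq a c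
    obtain ⟨r, hr, rfl⟩ := hh.exists_pow_lt_card_apply_eq a d
    have hp0 : p ≠ 0 := by rintro rfl; simp at hab
    have hq0 : q ≠ 0 := by rintro rfl; simp at hac
    have hr0 : r ≠ 0 := by rintro rfl; simp at had
    have hpq : p ≠ q := by rintro rfl; exact hbc rfl
    have hqr : q ≠ r := by rintro rfl; exact hcd rfl
    rcases hpq.lt_or_gt with hpq | hqp <;> rcases hqr.lt_or_gt with hqr | hrq
    · exact ⟨p, q, r, by omega, hpq, hqr, by simpa using hr, .inl ⟨rfl, rfl, rfl⟩⟩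
    · exact absurd hf (Perm.not_isCycleOn_univ_mul_swap_mul_swap_of_lt_of_lt hh
        (by omega) (by omega) hpq hrq hq)
    · exact absurd hf (Perm.not_isCycleOn_univ_mul_swap_mul_swap_of_gt_of_gt hh
        (by omega) hqp hqr hp hr)
    · exact ⟨r, q, p, by omega, hrq, hqp, by simpa using hp, .inr ⟨rfl, rfl, rfl⟩⟩
  · rintro ⟨i, j, k, hi, hij, hjk, hk, ⟨rfl, rfl, rfl⟩ | ⟨rfl, rfl, rfl⟩⟩
    · exact Perm.isCycleOn_univ_mul_swap_mul_swap hh hi hij hjk (by simpa using hk)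
    · rw [swap_comm ((h ^ k) a)]
      exact Perm.isCycleOn_univ_mul_swap_mul_swap hh hi hij hjk (by simpa using hk)

theorem n_cycle_times_two_disjoint_transpositions (n : ℕ) (h : Equiv.Perm (Fin n))
    (hc : h.IsCycle) (hs : h.support = Finset.univ)
    (a b c d : Fin n)
    (hab : a ≠ b) (hac : a ≠ c) (had : a ≠ d)
    (hbc : b ≠ c) (hbd : b ≠ d) (hcd : c ≠ d) :
    ((h * (Equiv.swap a c * Equiv.swap b d)).IsCycle ∧
        (h * (Equiv.swap a c * Equiv.swap b d)).support = Finset.univ) ↔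
      ∃ i j k : ℕ, 0 < i ∧ i < j ∧ j < k ∧ k < n ∧
        (((h ^ i) a = b ∧ (h ^ j) a = c ∧ (h ^ k) a = d) ∨
          ((h ^ i) a = d ∧ (h ^ j) a = c ∧ (h ^ k) a = b)) :=
  n_cycle_times_two_disjoint_transpositions_general n h hc hs a b c d hab hac had hbc hcd
end
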